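/- Let α ∈ (0,1/2) and L, M > 0, and let h, σ : [0,1] → ℝ be measurable with |h| ≤ L and |σ| ≤ M. For 0 < v < s ≤ 1 define g₄(s,v) = ∫_v^s ∫_r^s ∫_v^u s^α r^{−α} h(r) v^{−α} (x−v)^{α−1} x^α σ(x) (s−r)^{−(α+1)} dx du dr. Then the iterated integral converges absolutely and there is a constant C, depending only on α, L, M, such that |g₄(s,v)| ≤ C v^{−α} s^{2α} (s−v)^α for all 0 < v < s ≤ 1. In particular, for every fixed s ∈ (0,1], g₄(s,v) → 0 as v → s⁻. -/

import Mathlib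

open MeasureTheory Set intervalIntegral Filter Topology

/-- The kernel `g₄` from the regular-case Onsager–Machlup computation. -/
noncomputable def g₄ (α : ℝ) (h σ : ℝ → ℝ) (s v : ℝ) : ℝ :=
  ∫ r in v..s, ∫ u in r..s, ∫ x in v..u,
    s ^ α * r ^ (-α) * h r * v ^ (-α) *
      (x - v) ^ (α - 1) * x ^ α * σ x * (s - r) ^ (-(α + 1))

/-!
Write the integrand as `c(r) f(x)` with `c(r) = s^α r^{-α} h(r) v^{-α} (s-r)^{-(α+1)}` and
`f(x) = (x-v)^{α-1} x^α σ(x)`. The primitive `P(u) = ∫_v^u f` is bounded by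
`M s^α (s-v)^α / α`, so `∫_r^s P = O(s - r)` absorbs one power of the singularity
`(s-r)^{-(α+1)}`. What remains is dominated by `r^{-α} (s-r)^{-α} ≤ r^{-2α} + (s-r)^{-2α}`,
which is integrable because `2α < 1`, with integral at most `2 / (1 - 2α)` over
`[v, s] ⊆ [0, 1]`.
-/

open Real

section PowerIntegrals

variable {p : ℝ}

lemma intervalIntegrable_sub_rpow (hp : -1 < p) (v a b : ℝ) :
    IntervalIntegrable (fun x => (x - v) ^ p) volume a b := by
  simpa using (intervalIntegrable_rpow' hp (a := a - v) (b := b - v)).comp_sub_right v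

lemma intervalIntegrable_rsub_rpow (hp : -1 < p) (s a b : ℝ) :
    IntervalIntegrable (fun x => (s - x) ^ p) volume a b := by
  simpa using (intervalIntegrable_rpow' hp (a := s - b) (b := s - a)).comp_sub_left s |>.symm

lemma integral_sub_rpow (hp : -1 < p) (v u : ℝ) :
    ∫ x in v..u, (x - v) ^ p = (u - v) ^ (p + 1) / (p + 1) := by
  rw [integral_comp_sub_right (fun x => x ^ p), sub_self, integral_rpow (Or.inl hp),
    zero_rpow (by linarith), sub_zero]

lemma integral_rsub_rpow (hp : -1 < p) (v s : ℝ) :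
    ∫ x in v..s, (s - x) ^ p = (s - v) ^ (p + 1) / (p + 1) := by
  rw [integral_comp_sub_left (fun x => x ^ p), sub_self, integral_rpow (Or.inl hp),
    zero_rpow (by linarith), sub_zero]

lemma intervalIntegrable_rpow_add_rsub_rpow (hp : -1 < p) (s a b : ℝ) :
    IntervalIntegrable (fun r => r ^ p + (s - r) ^ p) volume a b :=
  (intervalIntegrable_rpow' hp).add (intervalIntegrable_rsub_rpow hp s a b)

lemma integral_rpow_add_rsub_rpow_le {v s : ℝ} (hp : -1 < p) (hv : 0 ≤ v) (hvs : v ≤ s)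
    (hs : s ≤ 1) : ∫ r in v..s, (r ^ p + (s - r) ^ p) ≤ 2 / (p + 1) := by
  have hp1 : 0 < p + 1 := by linarith
  rw [integral_add (intervalIntegrable_rpow' hp) (intervalIntegrable_rsub_rpow hp s v s),
    integral_rpow (Or.inl hp), integral_rsub_rpow hp, ← add_div]
  gcongr
  linarith [rpow_le_one (hv.trans hvs) hs hp1.le, rpow_nonneg hv (p + 1),
    rpow_le_one (by linarith : 0 ≤ s - v) (by linarith) hp1.le]

lemma rpow_mul_rpow_le_rpow_add_rpow {a b : ℝ} (ha : 0 ≤ a) (hb : 0 ≤ b) (p : ℝ) :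
    a ^ p * b ^ p ≤ a ^ (2 * p) + b ^ (2 * p) := by
  rw [mul_comm 2 p, rpow_mul ha, rpow_mul hb, rpow_two, rpow_two]
  nlinarith [two_mul_le_add_sq (a ^ p) (b ^ p), mul_nonneg (rpow_nonneg ha p) (rpow_nonneg hb p)]

end PowerIntegrals

section Weight

variable {α M v u : ℝ} {σ : ℝ → ℝ}

lemma norm_sub_rpow_mul_rpow_mul_le (hα : 0 < α) (hv : 0 ≤ v) {x : ℝ} (hx : x ∈ Ioc v u)
    (hσ : |σ x| ≤ M) :
    ‖(x - v) ^ (α - 1) * x ^ α * σ x‖ ≤ M * u ^ α * (x - v) ^ (α - 1) := by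
  have hx0 : 0 ≤ x := hv.trans hx.1.le
  have hxv : 0 ≤ (x - v) ^ (α - 1) := rpow_nonneg (by linarith [hx.1]) _
  have hxu : x ^ α ≤ u ^ α := rpow_le_rpow hx0 hx.2 hα.le
  rw [norm_mul, norm_mul, norm_of_nonneg hxv, norm_of_nonneg (rpow_nonneg hx0 α), norm_eq_abs]
  calc (x - v) ^ (α - 1) * x ^ α * |σ x| ≤ (x - v) ^ (α - 1) * u ^ α * M :=
        mul_le_mul (mul_le_mul_of_nonneg_left hxu hxv) hσ (abs_nonneg _)
          (mul_nonneg hxv (rpow_nonneg (hx0.trans hx.2) _))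
    _ = M * u ^ α * (x - v) ^ (α - 1) := by ring

lemma intervalIntegrable_sub_rpow_mul_rpow_mul (hα : 0 < α) (hv : 0 ≤ v) (hvu : v ≤ u)
    (hσm : Measurable σ) (hσ : ∀ x ∈ Ioc v u, |σ x| ≤ M) :
    IntervalIntegrable (fun x => (x - v) ^ (α - 1) * x ^ α * σ x) volume v u := by
  have hα1 : -1 < α - 1 := by linarith
  refine ((intervalIntegrable_sub_rpow hα1 v v u).const_mul (M * u ^ α)).mono_fun'
    (by fun_prop : Measurable _).aestronglyMeasurable ?_
  rw [EventuallyLE, uIoc_of_le hvu, ae_restrict_iff' measurableSet_Ioc]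
  exact Eventually.of_forall fun x hx => norm_sub_rpow_mul_rpow_mul_le hα hv hx (hσ x hx)

lemma abs_integral_sub_rpow_mul_rpow_mul_le (hα : 0 < α) (hv : 0 ≤ v) (hvu : v ≤ u)
    (hσ : ∀ x ∈ Ioc v u, |σ x| ≤ M) :
    |∫ x in v..u, (x - v) ^ (α - 1) * x ^ α * σ x| ≤ M * u ^ α * (u - v) ^ α / α := by
  have hα1 : -1 < α - 1 := by linarith
  rw [← norm_eq_abs]
  refine (norm_integral_le_of_norm_le hvu (Eventually.of_forall fun x hx =>
    norm_sub_rpow_mul_rpow_mul_le hα hv hx (hσ x hx))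
    ((intervalIntegrable_sub_rpow hα1 v v u).const_mul _)).trans_eq ?_
  rw [intervalIntegral.integral_const_mul, integral_sub_rpow hα1, sub_add_cancel, mul_div_assoc]

end Weight

section IteratedIntegral

variable {α A B v s : ℝ} {c P : ℝ → ℝ}

lemma abs_mul_integral_le (hA : 0 ≤ A) (hv : 0 ≤ v)
    (hc : ∀ r ∈ Ioo v s, |c r| ≤ A * r ^ (-α) * (s - r) ^ (-(α + 1)))
    (hP : ∀ u ∈ Icc v s, |P u| ≤ B) {r : ℝ} (hr : r ∈ Ioc v s) :
    |c r * ∫ u in r..s, P u| ≤ A * B * (r ^ (2 * -α) + (s - r) ^ (2 * -α)) := by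
  have hB : 0 ≤ B := (abs_nonneg _).trans (hP s ⟨hr.1.le.trans hr.2, le_rfl⟩)
  have hr0 : 0 ≤ r := hv.trans hr.1.le
  rcases hr.2.eq_or_lt with rfl | hrs
  · simp only [integral_same, mul_zero, abs_zero, sub_self]
    positivity
  have hsr : 0 < s - r := sub_pos.2 hrs
  have hQ : |∫ u in r..s, P u| ≤ B * (s - r) := by
    rw [← norm_eq_abs, ← abs_of_pos hsr]
    refine intervalIntegral.norm_integral_le_of_norm_le_const fun u hu => ?_
    rw [uIoc_of_le hrs.le] at hu
    exact (norm_eq_abs _).trans_le (hP u ⟨hr.1.le.trans hu.1.le, hu.2⟩)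
  calc |c r * ∫ u in r..s, P u|
      ≤ A * r ^ (-α) * (s - r) ^ (-(α + 1)) * (B * (s - r)) := by
        rw [abs_mul]
        have hcr := hc r ⟨hr.1, hrs⟩
        exact mul_le_mul hcr hQ (abs_nonneg _) ((abs_nonneg _).trans hcr)
    _ = A * B * (r ^ (-α) * (s - r) ^ (-α)) := by
        rw [show -α = -(α + 1) + 1 by ring, rpow_add_one hsr.ne']
        ring
    _ ≤ A * B * (r ^ (2 * -α) + (s - r) ^ (2 * -α)) := by
        gcongr
        exact rpow_mul_rpow_le_rpow_add_rpow hr0 hsr.le _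

lemma intervalIntegrable_mul_integral (hα : α < 1 / 2) (hA : 0 ≤ A) (hv : 0 ≤ v)
    (hvs : v ≤ s) (hcm : Measurable c)
    (hc : ∀ r ∈ Ioo v s, |c r| ≤ A * r ^ (-α) * (s - r) ^ (-(α + 1)))
    (hPc : ContinuousOn P (Icc v s)) (hP : ∀ u ∈ Icc v s, |P u| ≤ B) :
    IntervalIntegrable (fun r => c r * ∫ u in r..s, P u) volume v s := by
  have hQc : ContinuousOn (fun r => ∫ u in r..s, P u) (Icc v s) := by
    rw [← uIcc_of_le hvs] at hPc ⊢
    exact continuousOn_primitive_interval_left (hPc.integrableOn_compact isCompact_uIcc)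
  have hdom := intervalIntegrable_rpow_add_rsub_rpow (p := 2 * -α) (by linarith) s v s
  refine (hdom.const_mul (A * B)).mono_fun' ?_ ?_
  · rw [uIoc_of_le hvs]
    exact hcm.aestronglyMeasurable.mul
      ((hQc.mono Ioc_subset_Icc_self).aestronglyMeasurable measurableSet_Ioc)
  · rw [EventuallyLE, uIoc_of_le hvs, ae_restrict_iff' measurableSet_Ioc]
    exact Eventually.of_forall fun r hr =>
      (norm_eq_abs _).trans_le (abs_mul_integral_le hA hv hc hP hr)

lemma abs_integral_mul_integral_le (hα : α < 1 / 2) (hA : 0 ≤ A) (hv : 0 ≤ v) (hvs : v ≤ s)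
    (hs : s ≤ 1) (hc : ∀ r ∈ Ioo v s, |c r| ≤ A * r ^ (-α) * (s - r) ^ (-(α + 1)))
    (hP : ∀ u ∈ Icc v s, |P u| ≤ B) :
    |∫ r in v..s, c r * ∫ u in r..s, P u| ≤ A * B * (2 / (1 - 2 * α)) := by
  have hB : 0 ≤ B := (abs_nonneg _).trans (hP s ⟨hvs, le_rfl⟩)
  have hdom := intervalIntegrable_rpow_add_rsub_rpow (p := 2 * -α) (by linarith) s v s
  rw [← norm_eq_abs]
  refine (norm_integral_le_of_norm_le hvs (Eventually.of_forall fun r hr =>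
    (norm_eq_abs _).trans_le (abs_mul_integral_le hA hv hc hP hr))
    (hdom.const_mul (A * B))).trans ?_
  rw [intervalIntegral.integral_const_mul, show 1 - 2 * α = 2 * -α + 1 by ring]
  gcongr
  exact integral_rpow_add_rsub_rpow_le (by linarith) hv hvs hs

end IteratedIntegral

section Kernel

variable {α L M s v : ℝ} {h σ : ℝ → ℝ}

lemma g₄_integrand_eq (r x : ℝ) :
    s ^ α * r ^ (-α) * h r * v ^ (-α) * (x - v) ^ (α - 1) * x ^ α * σ x *
        (s - r) ^ (-(α + 1)) =
      (s ^ α * r ^ (-α) * h r * v ^ (-α) * (s - r) ^ (-(α + 1))) *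
        ((x - v) ^ (α - 1) * x ^ α * σ x) := by
  ring

lemma abs_g₄_coeff_le (hv : 0 ≤ v) {r : ℝ} (hr : r ∈ Ioo v s) (hh : |h r| ≤ L) :
    |s ^ α * r ^ (-α) * h r * v ^ (-α) * (s - r) ^ (-(α + 1))| ≤
      L * s ^ α * v ^ (-α) * r ^ (-α) * (s - r) ^ (-(α + 1)) := by
  have hr0 : 0 ≤ r := hv.trans hr.1.le
  have hs0 : 0 ≤ s := hr0.trans hr.2.le
  have hsr : 0 ≤ s - r := sub_nonneg.2 hr.2.le
  have hK : 0 ≤ s ^ α * v ^ (-α) * r ^ (-α) * (s - r) ^ (-(α + 1)) := by positivity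
  calc |s ^ α * r ^ (-α) * h r * v ^ (-α) * (s - r) ^ (-(α + 1))|
      = s ^ α * v ^ (-α) * r ^ (-α) * (s - r) ^ (-(α + 1)) * |h r| := by
        rw [← abs_of_nonneg hK, ← abs_mul]; ring_nf
    _ ≤ s ^ α * v ^ (-α) * r ^ (-α) * (s - r) ^ (-(α + 1)) * L :=
        mul_le_mul_of_nonneg_left hh hK
    _ = L * s ^ α * v ^ (-α) * r ^ (-α) * (s - r) ^ (-(α + 1)) := by ring

lemma abs_integral_sub_rpow_mul_rpow_mul_le_uniform (hα : 0 < α) (hv : 0 ≤ v) (hM : 0 ≤ M)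
    (hσ : ∀ x ∈ Ioc v s, |σ x| ≤ M) {u : ℝ} (hu : u ∈ Icc v s) :
    |∫ x in v..u, (x - v) ^ (α - 1) * x ^ α * σ x| ≤ M * s ^ α * (s - v) ^ α / α := by
  refine (abs_integral_sub_rpow_mul_rpow_mul_le hα hv hu.1
    fun x hx => hσ x (Ioc_subset_Ioc_right hu.2 hx)).trans ?_
  have hu0 : 0 ≤ u := hv.trans hu.1
  have huv : 0 ≤ u - v := sub_nonneg.2 hu.1
  have hs0 : 0 ≤ s := hu0.trans hu.2
  have hpow_nonneg := rpow_nonneg huv α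
  have hpow_le := rpow_le_rpow hu0 hu.2 hα.le
  have hsub_pow_le := rpow_le_rpow huv (sub_le_sub_right hu.2 v) hα.le
  gcongr

lemma g₄_intervalIntegrable_and_abs_le (hα : 0 < α) (hα₂ : α < 1 / 2) (hL : 0 ≤ L)
    (hM : 0 ≤ M) (hhm : Measurable h) (hσm : Measurable σ) (hh : ∀ x ∈ Ioo v s, |h x| ≤ L)
    (hσ : ∀ x ∈ Ioc v s, |σ x| ≤ M) (hv : 0 < v) (hvs : v < s) (hs : s ≤ 1) :
    (∀ r ∈ Ioo v s, ∀ u ∈ Ioo r s,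
      IntervalIntegrable
        (fun x => s ^ α * r ^ (-α) * h r * v ^ (-α) *
          (x - v) ^ (α - 1) * x ^ α * σ x * (s - r) ^ (-(α + 1)))
        volume v u) ∧
    (∀ r ∈ Ioo v s,
      IntervalIntegrable
        (fun u => ∫ x in v..u, s ^ α * r ^ (-α) * h r * v ^ (-α) *
          (x - v) ^ (α - 1) * x ^ α * σ x * (s - r) ^ (-(α + 1)))
        volume r s) ∧
    IntervalIntegrable
      (fun r => ∫ u in r..s, ∫ x in v..u,
        s ^ α * r ^ (-α) * h r * v ^ (-α) *
          (x - v) ^ (α - 1) * x ^ α * σ x * (s - r) ^ (-(α + 1)))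
      volume v s ∧
    |g₄ α h σ s v| ≤
      2 * L * M / (α * (1 - 2 * α)) * v ^ (-α) * s ^ (2 * α) * (s - v) ^ α := by
  have hweight := intervalIntegrable_sub_rpow_mul_rpow_mul hα hv.le hvs.le hσm hσ
  have hPc :
      ContinuousOn (fun u => ∫ x in v..u, (x - v) ^ (α - 1) * x ^ α * σ x) (Icc v s) := by
    rw [← uIcc_of_le hvs.le]
    exact continuousOn_primitive_interval' hweight left_mem_uIcc
  have hP := fun u (hu : u ∈ Icc v s) => abs_integral_sub_rpow_mul_rpow_mul_le_uniform hα hv.le hM hσ hu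
  have hc := fun r (hr : r ∈ Ioo v s) => abs_g₄_coeff_le (α := α) hv.le hr (hh r hr)
  have hs0 : 0 < s := hv.trans hvs
  have hA : 0 ≤ L * s ^ α * v ^ (-α) := by positivity
  simp_rw [g₄, g₄_integrand_eq, intervalIntegral.integral_const_mul]
  refine ⟨fun r hr u hu => ?_, fun r hr => ?_, ?_, ?_⟩
  · have hus : u ∈ uIcc v s := mem_uIcc_of_le (hr.1.trans hu.1).le hu.2.le
    exact (hweight.mono_set (uIcc_subset_uIcc_left hus)).const_mul _
  · exact ((hPc.mono (Icc_subset_Icc_left hr.1.le)).intervalIntegrable_of_Icc hr.2.le).const_mul _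
  · exact intervalIntegrable_mul_integral hα₂ hA hv.le hvs.le (by fun_prop) hc hPc hP
  · refine (abs_integral_mul_integral_le hα₂ hA hv.le hvs.le hs hc hP).trans_eq ?_
    rw [show 2 * α = α + α by ring, rpow_add (hv.trans hvs)]
    field_simp

end Kernel

lemma tendsto_nhdsLT_zero_of_abs_le {g : ℝ → ℝ} {C α s : ℝ} (hα : 0 < α) (hs : 0 < s)
    (hg : ∀ v, 0 < v → v < s → |g v| ≤ C * v ^ (-α) * s ^ (2 * α) * (s - v) ^ α) :
    Tendsto g (𝓝[<] s) (𝓝 0) := by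
  have hbound : ContinuousAt (fun v => C * v ^ (-α) * s ^ (2 * α) * (s - v) ^ α) s := by
    fun_prop (disch := first | exact Or.inl hs.ne' | exact Or.inr hα.le)
  refine squeeze_zero_norm' ?_ (by
    simpa [zero_rpow hα.ne'] using hbound.tendsto.mono_left nhdsWithin_le_nhds)
  filter_upwards [Ioo_mem_nhdsLT hs] with v hv
  exact hg v hv.1 hv.2

/-- For `α ∈ (0,1/2)`, `|h| ≤ L`, `|σ| ≤ M`, the iterated integral defining
`g₄` converges absolutely and there is a constant `C = C(α, L, M)` with
`|g₄(s,v)| ≤ C v^{-α} s^{2α} (s-v)^α` for `0 < v < s ≤ 1`; in particular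
`g₄` vanishes on the diagonal. -/
theorem g₄_bound
    (α L M : ℝ) (hα0 : 0 < α) (hα1 : α < 1 / 2) (hL : 0 < L) (hM : 0 < M) :
    ∃ C : ℝ, 0 < C ∧
      ∀ h σ : ℝ → ℝ, Measurable h → Measurable σ →
        (∀ x ∈ Icc (0:ℝ) 1, |h x| ≤ L) → (∀ x ∈ Icc (0:ℝ) 1, |σ x| ≤ M) →
        (∀ v s : ℝ, 0 < v → v < s → s ≤ 1 →
          (∀ r ∈ Ioo v s, ∀ u ∈ Ioo r s,
            IntervalIntegrable
              (fun x => s ^ α * r ^ (-α) * h r * v ^ (-α) *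
                (x - v) ^ (α - 1) * x ^ α * σ x * (s - r) ^ (-(α + 1)))
              volume v u) ∧
          (∀ r ∈ Ioo v s,
            IntervalIntegrable
              (fun u => ∫ x in v..u, s ^ α * r ^ (-α) * h r * v ^ (-α) *
                (x - v) ^ (α - 1) * x ^ α * σ x * (s - r) ^ (-(α + 1)))
              volume r s) ∧
          IntervalIntegrable
            (fun r => ∫ u in r..s, ∫ x in v..u,
              s ^ α * r ^ (-α) * h r * v ^ (-α) *
                (x - v) ^ (α - 1) * x ^ α * σ x * (s - r) ^ (-(α + 1)))
            volume v s ∧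
          |g₄ α h σ s v| ≤ C * v ^ (-α) * s ^ (2 * α) * (s - v) ^ α) ∧
        ∀ s ∈ Ioc (0:ℝ) 1,
          Tendsto (fun v => g₄ α h σ s v) (nhdsWithin s (Iio s)) (nhds 0) := by
  have hα2 : 0 < 1 - 2 * α := by linarith
  refine ⟨2 * L * M / (α * (1 - 2 * α)), by positivity, fun h σ hhm hσm hh hσ => ?_⟩
  have hbound := fun v s (hv : 0 < v) (hvs : v < s) (hs : s ≤ 1) =>
    g₄_intervalIntegrable_and_abs_le hα0 hα1 hL.le hM.le hhm hσm
      (fun x hx => hh x ⟨hv.le.trans hx.1.le, hx.2.le.trans hs⟩)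
      (fun x hx => hσ x ⟨hv.le.trans hx.1.le, hx.2.trans hs⟩) hv hvs hs
  exact ⟨hbound, fun s hs => tendsto_nhdsLT_zero_of_abs_le hα0 hs.1
    fun v hv hvs => (hbound v s hv hvs hs.2).2.2.2⟩
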